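/- arXiv:2312.12229 — 3 statements merged into one kernel-verified Lean document; each statement's English description precedes it below -/
import Mathlib

section
/- Let g≥0 and let a_0<b_0<a_1<b_1<⋯<a_g<b_g be real numbers; set σ(x) := ∏_{h=0}^g (x−a_h)(x−b_h) and S := ⋃_{h=0}^g [a_h,b_h]. Then there exists exactly one holomorphic function s on ℂ∖S such that s(z)² = σ(z) for all z∈ℂ∖S and s(z)/z^{g+1} → 1 as |z|→∞. Moreover: (i) for every h∈{0,…,g+1} and every real x in the gap G_h (where G_0 = (−∞,a_0), G_h = (b_{h−1},a_h) for 1≤h≤g, and G_{g+1} = (b_g,+∞)), one has σ(x)>0 and s(x) = (−1)^{g+1−h}√(σ(x)); and (ii) for every h∈{0,…,g} and every x∈(a_h,b_h), one has σ(x)<0 and lim_{ε→0+} s(x+iε) = i·(−1)^{g−h}·√(−σ(x)). -/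
open Filter

noncomputable section

/-- `σ(x) = ∏_{h=0}^g (x − a_h)(x − b_h)` as a real polynomial function. -/
def sigmaR (g : ℕ) (a b : Fin (g + 1) → ℝ) (x : ℝ) : ℝ :=
  ∏ h : Fin (g + 1), (x - a h) * (x - b h)

/-- `σ(z) = ∏_{h=0}^g (z − a_h)(z − b_h)` as a complex polynomial function. -/
def sigmaC (g : ℕ) (a b : Fin (g + 1) → ℝ) (z : ℂ) : ℂ :=
  ∏ h : Fin (g + 1), (z - (a h : ℂ)) * (z - (b h : ℂ))

/-- `S = ⋃_{h=0}^g [a_h, b_h]`, viewed as a subset of `ℂ`. -/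
def bandsC (g : ℕ) (a b : Fin (g + 1) → ℝ) : Set ℂ :=
  ⋃ h : Fin (g + 1), Complex.ofReal '' Set.Icc (a h) (b h)

open Filter Complex Set

noncomputable section
namespace SqS

def cut (u v : ℝ) : Set ℂ := Complex.ofReal '' Set.Icc u v

def f (u v : ℝ) (z : ℂ) : ℂ := (z - u) * ((z - v)/(z - u)) ^ (1/2 : ℂ)

variable {u v : ℝ}

lemma ne_u (huv : u ≤ v) {z : ℂ} (hz : z ∉ cut u v) : z - (u:ℂ) ≠ 0 := by
  intro h
  exact hz ⟨u, ⟨le_refl u, huv⟩, by linear_combination -h⟩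

lemma ne_v (huv : u ≤ v) {z : ℂ} (hz : z ∉ cut u v) : z - (v:ℂ) ≠ 0 := by
  intro h
  exact hz ⟨v, ⟨huv, le_refl v⟩, by linear_combination -h⟩

lemma slit (huv : u < v) {z : ℂ} (hz : z ∉ cut u v) :
    (z - v)/(z - u) ∈ Complex.slitPlane := by
  by_contra hw
  rw [Complex.mem_slitPlane_iff] at hw
  push_neg at hw
  set w : ℂ := (z - v)/(z - u) with hwdef
  obtain ⟨hre, him⟩ := hw
  set r : ℝ := w.re with hrdef
  have hwr : w = (r : ℂ) := Complex.ext rfl (by simp [him])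
  have hzu : z - (u:ℂ) ≠ 0 := ne_u huv.le hz
  have h1 : z - (v:ℂ) = (r:ℂ) * (z - u) := by
    rw [← hwr, hwdef]; field_simp
  have hr1 : (0:ℝ) < 1 - r := by linarith
  have hz' : z = (((v - r*u)/(1-r) : ℝ) : ℂ) := by
    have h1r : ((1:ℂ) - r) ≠ 0 := by
      intro h
      have : (1:ℝ) - r = 0 := by exact_mod_cast congrArg Complex.re h
      linarith
    push_cast
    field_simp
    linear_combination h1
  apply hz
  refine ⟨(v - r*u)/(1-r), ⟨?_, ?_⟩, hz'.symm⟩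
  · rw [le_div_iff₀ hr1]; nlinarith
  · rw [div_le_iff₀ hr1]; nlinarith

lemma w_ne_zero (huv : u < v) {z : ℂ} (hz : z ∉ cut u v) : (z - v)/(z - u) ≠ 0 :=
  Complex.slitPlane_ne_zero (slit huv hz)

lemma cpow_half_sq {w : ℂ} (hw : w ≠ 0) : (w ^ (1/2 : ℂ))^2 = w := by
  rw [sq, ← Complex.cpow_add _ _ hw]
  norm_num

lemma f_sq (huv : u < v) {z : ℂ} (hz : z ∉ cut u v) :
    f u v z ^ 2 = (z - u) * (z - v) := by
  have hzu := ne_u huv.le hz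
  rw [f, mul_pow, cpow_half_sq (w_ne_zero huv hz)]
  field_simp

lemma f_diff (huv : u < v) {z : ℂ} (hz : z ∉ cut u v) :
    DifferentiableAt ℂ (f u v) z := by
  have h1 : DifferentiableAt ℂ (fun z : ℂ => (z - v)/(z - u)) z :=
    ((differentiableAt_id.sub (differentiableAt_const _)).div
      (differentiableAt_id.sub (differentiableAt_const _)) (ne_u huv.le hz))
  exact (differentiableAt_id.sub (differentiableAt_const _)).mul
    (h1.cpow (differentiableAt_const _) (slit huv hz))

lemma f_cont (huv : u < v) {z : ℂ} (hz : z ∉ cut u v) : ContinuousAt (f u v) z :=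
  (f_diff huv hz).continuousAt

lemma cpow_half_real {t : ℝ} (ht : 0 ≤ t) :
    ((t : ℂ)) ^ (1/2 : ℂ) = ((Real.sqrt t : ℝ) : ℂ) := by
  rw [Real.sqrt_eq_rpow, Complex.ofReal_cpow ht]
  norm_num

lemma ofReal_sub_ne {x y : ℝ} (h : x ≠ y) : (x:ℂ) - y ≠ 0 := by
  intro hc
  exact h (by exact_mod_cast sub_eq_zero.mp hc)

lemma f_real (x : ℝ) (hx : (x - v)/(x - u) ≥ 0) (hxu : (x:ℂ) - u ≠ 0) :
    f u v (x : ℂ) = (((x - u) * Real.sqrt ((x - v)/(x - u)) : ℝ) : ℂ) := by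
  rw [f]
  have : ((x:ℂ) - v)/((x:ℂ) - u) = (((x - v)/(x - u) : ℝ) : ℂ) := by push_cast; ring
  rw [this, cpow_half_real hx]
  push_cast
  ring

lemma f_real_pos (huv : u < v) {x : ℝ} (hx : v < x) :
    f u v (x : ℂ) = ((Real.sqrt ((x - u)*(x - v)) : ℝ) : ℂ) := by
  have h1 : (0:ℝ) < x - u := by linarith
  have h2 : (0:ℝ) ≤ x - v := by linarith
  rw [f_real x (div_nonneg h2 h1.le)
    (ofReal_sub_ne (by intro h; subst h; linarith))]
  congr 1
  rw [Real.sqrt_div h2]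
  have h3 : Real.sqrt (x-u) ≠ 0 := by positivity
  field_simp
  rw [Real.sqrt_mul h1.le]; linear_combination -Real.sqrt (x-v) * Real.sq_sqrt h1.le


lemma mul_sqrt_div {p q : ℝ} (hp : 0 < p) (hq : 0 ≤ q) :
    p * Real.sqrt (q/p) = Real.sqrt (p*q) := by
  rw [Real.sqrt_div hq, Real.sqrt_mul hp.le]
  have h3 : Real.sqrt p ≠ 0 := by positivity
  field_simp
  linear_combination -Real.sqrt q * Real.sq_sqrt hp.le

lemma f_real_neg (huv : u < v) {x : ℝ} (hx : x < u) :
    f u v (x : ℂ) = ((-Real.sqrt ((x - u)*(x - v)) : ℝ) : ℂ) := by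
  have h1 : (0:ℝ) < u - x := by linarith
  have h2 : (0:ℝ) ≤ v - x := by linarith
  have hr : (x - v)/(x - u) = (v - x)/(u - x) := by
    rw [← neg_div_neg_eq]; ring_nf
  rw [f_real x (by rw [hr]; positivity) (ofReal_sub_ne (by intro h; subst h; linarith))]
  congr 1
  rw [hr, Real.sqrt_div h2]
  have h3 : Real.sqrt (u-x) ≠ 0 := by positivity
  have h4 : (x - u)*(x - v) = (u - x)*(v - x) := by ring
  rw [h4, Real.sqrt_mul h1.le]
  field_simp
  linear_combination Real.sqrt (v-x) * Real.sq_sqrt h1.le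

lemma f_tendsto (huv : u < v) :
    Tendsto (fun z : ℂ => f u v z / z) (comap (fun z : ℂ => ‖z‖) atTop) (nhds 1) := by
  set L := comap (fun z : ℂ => ‖z‖) atTop with hL
  have hnorm : Tendsto (fun z : ℂ => ‖z‖) L atTop := tendsto_comap
  have hinv : ∀ c : ℝ, Tendsto (fun z : ℂ => (z - (c:ℂ))⁻¹) L (nhds 0) := by
    intro c
    rw [tendsto_zero_iff_norm_tendsto_zero]
    simp only [norm_inv]
    apply Tendsto.comp tendsto_inv_atTop_zero
    apply tendsto_atTop_mono (fun z => norm_sub_norm_le z ((c:ℂ)))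
    exact tendsto_atTop_add_const_right _ _ hnorm
  have hne : ∀ c : ℝ, ∀ᶠ z : ℂ in L, z - (c:ℂ) ≠ 0 := by
    intro c
    filter_upwards [hnorm.eventually (eventually_gt_atTop ‖(c:ℂ)‖)] with z hz h
    rw [sub_eq_zero] at h
    subst h
    exact lt_irrefl _ hz
  have hw : Tendsto (fun z : ℂ => (z - (v:ℂ))/(z - (u:ℂ))) L (nhds 1) := by
    have h0 : Tendsto (fun z : ℂ => 1 + ((u:ℂ) - (v:ℂ)) * (z - (u:ℂ))⁻¹) L (nhds 1) := by
      have := (tendsto_const_nhds : Tendsto (fun _ : ℂ => (1:ℂ)) L (nhds 1)).add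
        ((tendsto_const_nhds : Tendsto (fun _ : ℂ => (u:ℂ) - v) L (nhds ((u:ℂ) - v))).mul (hinv u))
      simpa using this
    apply h0.congr'
    filter_upwards [hne u] with z hz
    field_simp
    ring
  have hroot : Tendsto (fun z : ℂ => ((z - (v:ℂ))/(z - (u:ℂ))) ^ (1/2:ℂ)) L (nhds 1) := by
    have := hw.cpow (tendsto_const_nhds :
        Tendsto (fun _ : ℂ => (1/2:ℂ)) L (nhds (1/2:ℂ))) (by simp [Complex.mem_slitPlane_iff])
    simpa using this
  have hz0 : Tendsto (fun z : ℂ => z⁻¹) L (nhds 0) := by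
    simpa using hinv 0
  have h2 : Tendsto (fun z : ℂ => (1 - (u:ℂ) * z⁻¹) *
      ((z - (v:ℂ))/(z - (u:ℂ))) ^ (1/2:ℂ)) L (nhds 1) := by
    have := ((tendsto_const_nhds : Tendsto (fun _ : ℂ => (1:ℂ)) L (nhds 1)).sub
      ((tendsto_const_nhds : Tendsto (fun _ : ℂ => (u:ℂ)) L (nhds (u:ℂ))).mul hz0)).mul hroot
    simpa using this
  apply h2.congr'
  have hz_ne : ∀ᶠ z : ℂ in L, z ≠ 0 := by
    filter_upwards [hne 0] with z hz
    simpa using hz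
  filter_upwards [hz_ne] with z hz
  rw [f]
  field_simp

lemma f_lim (huv : u < v) {x : ℝ} (hx : u < x) (hxv : x < v) :
    Tendsto (fun ε : ℝ => f u v ((x:ℂ) + (ε:ℂ) * Complex.I)) (nhdsWithin 0 (Set.Ioi 0))
      (nhds (Complex.I * ((Real.sqrt ((x - u)*(v - x)) : ℝ) : ℂ))) := by
  have hbase : Tendsto (fun ε : ℝ => (x:ℂ) + (ε:ℂ) * Complex.I) (nhdsWithin 0 (Set.Ioi 0))
      (nhds (x:ℂ)) := by
    have hc : Continuous (fun ε : ℝ => (x:ℂ) + (ε:ℂ) * Complex.I) := by continuity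
    have h := (hc.tendsto 0).mono_left
      (nhdsWithin_le_nhds : nhdsWithin (0:ℝ) (Set.Ioi 0) ≤ nhds 0)
    simpa using h
  set q : ℝ → ℂ := fun ε => (((x:ℂ) + (ε:ℂ) * Complex.I) - v)/(((x:ℂ) + (ε:ℂ) * Complex.I) - u)
    with hq
  set rC : ℂ := (((x - v)/(x - u) : ℝ) : ℂ) with hrC
  have hxu : (0:ℝ) < x - u := by linarith
  have hxv' : (0:ℝ) < v - x := by linarith
  have hrC_re : rC.re < 0 := by
    simp only [hrC, Complex.ofReal_re]
    apply div_neg_of_neg_of_pos <;> linarith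
  have hrC_im : rC.im = 0 := by rw [hrC, Complex.ofReal_im]
  -- imaginary part of q ε is positive for ε > 0
  have him : ∀ ε : ℝ, 0 < ε → 0 < (q ε).im := by
    intro ε hε
    rw [hq]
    simp only [Complex.div_im]
    have h1 : (((x:ℂ) + (ε:ℂ) * Complex.I) - v).im = ε := by simp
    have h2 : (((x:ℂ) + (ε:ℂ) * Complex.I) - v).re = x - v := by simp
    have h3 : (((x:ℂ) + (ε:ℂ) * Complex.I) - u).im = ε := by simp
    have h4 : (((x:ℂ) + (ε:ℂ) * Complex.I) - u).re = x - u := by simp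
    rw [h1, h2, h3, h4]
    have h5 : 0 < Complex.normSq (((x:ℂ) + (ε:ℂ) * Complex.I) - u) := by
      apply Complex.normSq_pos.2
      intro h
      have := congrArg Complex.im h
      simp at this
      linarith
    rw [div_sub_div_same]
    apply div_pos _ h5
    nlinarith
  have hden : ((x:ℂ) - u) ≠ 0 := ofReal_sub_ne (by intro h; subst h; exact lt_irrefl _ hx)
  have hq_t : Tendsto q (nhdsWithin 0 (Set.Ioi 0)) (nhds rC) := by
    have hc : ContinuousAt (fun z : ℂ => (z - (v:ℂ))/(z - (u:ℂ))) (x:ℂ) :=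
      ((continuous_id.sub continuous_const).continuousAt).div
        ((continuous_id.sub continuous_const).continuousAt) hden
    have h2 : Tendsto (fun z : ℂ => (z - (v:ℂ))/(z - (u:ℂ))) (nhds (x:ℂ)) (nhds rC) := by
      have : rC = ((x:ℂ) - v)/((x:ℂ) - u) := by rw [hrC]; push_cast; ring
      rw [this]
      exact hc.tendsto
    exact h2.comp hbase
  have hmem : ∀ᶠ ε in nhdsWithin (0:ℝ) (Set.Ioi 0), q ε ∈ {z : ℂ | 0 ≤ z.im} := by
    filter_upwards [self_mem_nhdsWithin] with ε hε
    exact (him ε hε).le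
  have hq_t' : Tendsto q (nhdsWithin 0 (Set.Ioi 0)) (nhdsWithin rC {z : ℂ | 0 ≤ z.im}) :=
    tendsto_nhdsWithin_iff.mpr ⟨hq_t, hmem⟩
  set t : ℝ := (v - x)/(x - u) with ht
  have habs : ‖rC‖ = t := by
    rw [hrC, Complex.norm_real, Real.norm_eq_abs, abs_div, abs_of_neg (by linarith : x - v < 0),
      abs_of_pos hxu, ht]
    ring_nf
  have ht0 : 0 < t := by positivity
  have hlog : Tendsto (fun ε => Complex.log (q ε)) (nhdsWithin 0 (Set.Ioi 0))
      (nhds ((Real.log t : ℂ) + Real.pi * Complex.I)) := by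
    have := (Complex.tendsto_log_nhdsWithin_im_nonneg_of_re_neg_of_im_zero
      hrC_re hrC_im).comp hq_t'
    rwa [habs] at this
  have hqne : ∀ᶠ ε in nhdsWithin (0:ℝ) (Set.Ioi 0), q ε ≠ 0 := by
    filter_upwards [self_mem_nhdsWithin] with ε hε h
    have := him ε hε
    rw [h] at this
    simp at this
  have hexp : Tendsto (fun ε => Complex.exp (Complex.log (q ε) * (1/2)))
      (nhdsWithin 0 (Set.Ioi 0))
      (nhds (Complex.exp (((Real.log t : ℂ) + Real.pi * Complex.I) * (1/2)))) :=
    (Complex.continuous_exp.tendsto _).comp (hlog.mul_const _)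
  have hval : Complex.exp (((Real.log t : ℂ) + Real.pi * Complex.I) * (1/2))
      = Complex.I * ((Real.sqrt t : ℝ) : ℂ) := by
    rw [add_mul, Complex.exp_add]
    have e1 : ((Real.log t : ℂ)) * (1/2) = ((Real.log t * (1/2) : ℝ) : ℂ) := by
      push_cast; ring
    rw [e1, ← Complex.ofReal_exp]
    have e2 : Real.exp (Real.log t * (1/2)) = Real.sqrt t := by
      rw [Real.sqrt_eq_rpow, Real.rpow_def_of_pos ht0]
    have e3 : Complex.exp ((Real.pi : ℂ) * Complex.I * (1/2)) = Complex.I := by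
      have h4 : (Real.pi : ℂ) * Complex.I * (1/2) = ((Real.pi/2 : ℝ) : ℂ) * Complex.I := by
        push_cast; ring
      rw [h4, Complex.exp_mul_I, ← Complex.ofReal_cos, ← Complex.ofReal_sin,
        Real.cos_pi_div_two, Real.sin_pi_div_two]
      simp
    rw [e2, e3]
    ring
  have hpow : Tendsto (fun ε => q ε ^ (1/2:ℂ)) (nhdsWithin 0 (Set.Ioi 0))
      (nhds (Complex.I * ((Real.sqrt t : ℝ) : ℂ))) := by
    rw [← hval]
    apply hexp.congr'
    filter_upwards [hqne] with ε hε
    rw [Complex.cpow_def_of_ne_zero hε]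
  have hfac : Tendsto (fun ε : ℝ => (x:ℂ) + (ε:ℂ) * Complex.I - u)
      (nhdsWithin 0 (Set.Ioi 0)) (nhds ((x:ℂ) - u)) := hbase.sub_const _
  have hmul := hfac.mul hpow
  have hfeq : (fun ε : ℝ => ((x:ℂ) + (ε:ℂ) * Complex.I - u) * q ε ^ (1/2:ℂ))
      = fun ε : ℝ => f u v ((x:ℂ) + (ε:ℂ) * Complex.I) := rfl
  rw [hfeq] at hmul
  convert hmul using 2
  rw [← mul_sqrt_div hxu (le_of_lt hxv'), ht]
  push_cast
  ring


/-! ## Assembly -/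

section Assembly

variable {g : ℕ} {a b : Fin (g + 1) → ℝ}

/-- the global square root -/
def sP (a b : Fin (g + 1) → ℝ) (z : ℂ) : ℂ := ∏ h : Fin (g + 1), f (a h) (b h) z

def bands (a b : Fin (g + 1) → ℝ) : Set ℂ := ⋃ h : Fin (g + 1), cut (a h) (b h)

variable (hab : ∀ h, a h < b h) (hba : ∀ h : Fin g, b h.castSucc < a h.succ)

section ordered
include hab hba

lemma aMono : StrictMono a :=
  Fin.strictMono_iff_lt_succ.mpr fun i => lt_trans (hab i.castSucc) (hba i)

lemma bMono : StrictMono b :=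
  Fin.strictMono_iff_lt_succ.mpr fun i => lt_trans (hba i) (hab i.succ)

lemma b_lt_a {i j : Fin (g + 1)} (hij : i < j) : b i < a j := by
  have hj1 : 1 ≤ j.val := by
    have := Fin.lt_def.mp hij
    omega
  have hjg : j.val - 1 < g := by
    have := j.isLt
    omega
  set j' : Fin g := ⟨j.val - 1, hjg⟩ with hj'
  have hsucc : j'.succ = j := by
    apply Fin.ext
    simp [hj', Fin.val_succ]
    omega
  have h1 : b i ≤ b j'.castSucc := by
    apply (bMono hab hba).monotone
    rw [Fin.le_def]
    simp [hj', Fin.coe_castSucc]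
    have := Fin.lt_def.mp hij
    omega
  calc b i ≤ b j'.castSucc := h1
    _ < a j'.succ := hba j'
    _ = a j := by rw [hsucc]

end ordered

lemma notMem_cut {x : ℝ} {u v : ℝ} (hx : x < u ∨ v < x) : (x:ℂ) ∉ cut u v := by
  rintro ⟨y, ⟨h1, h2⟩, hy⟩
  have : y = x := by exact_mod_cast hy
  subst this
  rcases hx with h | h <;> linarith

lemma notMem_bands_of_gaps {x : ℝ} (hx : ∀ i, x < a i ∨ b i < x) : (x:ℂ) ∉ bands a b := by
  rw [bands, Set.mem_iUnion]
  rintro ⟨i, hi⟩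
  exact notMem_cut (hx i) hi

lemma notMem_bands_of_im {z : ℂ} (hz : z.im ≠ 0) : z ∉ bands a b := by
  rw [bands, Set.mem_iUnion]
  rintro ⟨i, y, _, hy⟩
  apply hz
  rw [← hy]
  exact rfl

lemma mem_compl_iff' {z : ℂ} : z ∈ (bands a b)ᶜ ↔ ∀ i, z ∉ cut (a i) (b i) := by
  simp [bands, Set.mem_iUnion]

/-- square root of a product of nonnegatives -/
lemma sqrt_prod {ι : Type*} (s : Finset ι) (p : ι → ℝ) (hp : ∀ i ∈ s, 0 ≤ p i) :
    ∏ i ∈ s, Real.sqrt (p i) = Real.sqrt (∏ i ∈ s, p i) := by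
  induction s using Finset.cons_induction with
  | empty => simp
  | cons i s his ih =>
    rw [Finset.prod_cons, Finset.prod_cons,
      ih (fun j hj => hp j (Finset.mem_cons_of_mem hj)),
      ← Real.sqrt_mul (hp i (Finset.mem_cons_self i s))]

include hab in
lemma sigmaR_pos {x : ℝ} (hx : ∀ i, x < a i ∨ b i < x) :
    ∀ i, 0 < (x - a i) * (x - b i) := by
  intro i
  rcases hx i with h | h
  · have := hab i; nlinarith
  · have := hab i; nlinarith

include hab in
lemma sP_real {x : ℝ} (hx : ∀ i, x < a i ∨ b i < x) :
    sP a b (x:ℂ) =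
      (((-1:ℝ) ^ (Finset.univ.filter (fun i : Fin (g+1) => x < a i)).card *
        Real.sqrt (∏ i : Fin (g+1), (x - a i) * (x - b i)) : ℝ) : ℂ) := by
  have hp := sigmaR_pos hab hx
  have heach : ∀ i : Fin (g+1), f (a i) (b i) (x:ℂ) =
      (((if x < a i then (-1:ℝ) else 1) * Real.sqrt ((x - a i) * (x - b i)) : ℝ) : ℂ) := by
    intro i
    rcases hx i with h | h
    · rw [f_real_neg (hab i) h, if_pos h]
      push_cast
      ring
    · rw [f_real_pos (hab i) h, if_neg (by have := hab i; linarith)]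
      push_cast
      ring
  rw [sP]
  rw [Finset.prod_congr rfl (fun i _ => heach i), ← Complex.ofReal_prod]
  congr 1
  rw [Finset.prod_mul_distrib, Finset.prod_ite, Finset.prod_const, Finset.prod_const,
    one_pow, mul_one, sqrt_prod _ _ (fun i _ => (hp i).le)]

/-- counting: number of indices above a given one -/
lemma card_gt (k : Fin (g + 1)) :
    (Finset.univ.filter (fun i : Fin (g+1) => k < i)).card = g - k.val := by
  have : Finset.univ.filter (fun i : Fin (g+1) => k < i) = Finset.Ioi k := by
    ext i
    simp [Finset.mem_Ioi]
  rw [this, Fin.card_Ioi]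
  rfl

include hab in
lemma sP_diff : DifferentiableOn ℂ (sP a b) (bands a b)ᶜ := by
  intro z hz
  apply DifferentiableAt.differentiableWithinAt
  apply DifferentiableAt.fun_finsetProd
  intro i _
  exact f_diff (hab i) (mem_compl_iff'.mp hz i)

include hab in
lemma sP_sq {z : ℂ} (hz : z ∈ (bands a b)ᶜ) :
    sP a b z ^ 2 = ∏ h : Fin (g+1), (z - (a h : ℂ)) * (z - (b h : ℂ)) := by
  rw [sP, ← Finset.prod_pow]
  exact Finset.prod_congr rfl fun i _ => f_sq (hab i) (mem_compl_iff'.mp hz i)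

include hab in
lemma sP_tendsto :
    Tendsto (fun z : ℂ => sP a b z / z ^ (g + 1))
      (comap (fun z : ℂ => ‖z‖) atTop) (nhds 1) := by
  set L := comap (fun z : ℂ => ‖z‖) atTop with hL
  have hnorm : Tendsto (fun z : ℂ => ‖z‖) L atTop := tendsto_comap
  have hne : ∀ᶠ z : ℂ in L, z ≠ 0 := by
    filter_upwards [hnorm.eventually (eventually_gt_atTop 0)] with z hz h
    rw [h] at hz
    simp at hz
  have h1 : Tendsto (fun z : ℂ => ∏ i : Fin (g+1), (f (a i) (b i) z / z)) L (nhds 1) := by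
    have := tendsto_finset_prod (f := fun (i : Fin (g+1)) (z : ℂ) => f (a i) (b i) z / z)
      (a := fun _ => (1:ℂ)) Finset.univ (fun i _ => f_tendsto (hab i))
    simpa [hL] using this
  apply h1.congr'
  filter_upwards [hne] with z hz
  rw [sP, Finset.prod_div_distrib]
  congr 1
  rw [Finset.prod_const]
  simp

include hab hba in
lemma bands_bounds {z : ℂ} (hz : z ∈ bands a b) :
    z.im = 0 ∧ a 0 ≤ z.re ∧ z.re ≤ b (Fin.last g) := by
  rw [bands, Set.mem_iUnion] at hz
  obtain ⟨i, y, ⟨h1, h2⟩, hy⟩ := hz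
  subst hy
  refine ⟨rfl, ?_, ?_⟩
  · simp only [Complex.ofReal_re]
    calc a 0 ≤ a i := (aMono hab hba).monotone (Fin.zero_le i)
      _ ≤ y := h1
  · simp only [Complex.ofReal_re]
    calc y ≤ b i := h2
      _ ≤ b (Fin.last g) := (bMono hab hba).monotone (Fin.le_last i)

include hab hba in
lemma bands_norm_le {z : ℂ} (hz : z ∈ bands a b) :
    ‖z‖ ≤ |a 0| + |b (Fin.last g)| := by
  obtain ⟨him, h1, h2⟩ := bands_bounds hab hba hz
  have : z = (z.re : ℂ) := by
    apply Complex.ext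
    · rfl
    · simp [him]
  rw [this, Complex.norm_real, Real.norm_eq_abs, abs_le]
  constructor
  · have := abs_nonneg (b (Fin.last g))
    have := neg_abs_le (a 0)
    linarith
  · have := abs_nonneg (a 0)
    have := le_abs_self (b (Fin.last g))
    linarith

include hab hba in
lemma eventually_mem_compl :
    ∀ᶠ z : ℂ in comap (fun z : ℂ => ‖z‖) atTop, z ∈ (bands a b)ᶜ := by
  have hnorm : Tendsto (fun z : ℂ => ‖z‖) (comap (fun z : ℂ => ‖z‖) atTop) atTop :=
    tendsto_comap
  filter_upwards [hnorm.eventually (eventually_gt_atTop (|a 0| + |b (Fin.last g)|))] with z hz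
  intro hmem
  exact absurd (bands_norm_le hab hba hmem) (not_le.mpr hz)

lemma comap_neBot : (comap (fun z : ℂ => ‖z‖) atTop).NeBot := by
  have h : Tendsto (fun r : ℝ => (r:ℂ)) atTop (comap (fun z : ℂ => ‖z‖) atTop) := by
    rw [tendsto_comap_iff]
    have : (fun z : ℂ => ‖z‖) ∘ (fun r : ℝ => (r:ℂ)) = fun r : ℝ => |r| := by
      ext r
      simp [Complex.norm_real]
    rw [this]
    exact tendsto_abs_atTop_atTop
  exact neBot_of_le h

include hab in
lemma sigmaC_ne_zero {z : ℂ} (hz : z ∈ (bands a b)ᶜ) :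
    ∏ h : Fin (g+1), (z - (a h : ℂ)) * (z - (b h : ℂ)) ≠ 0 := by
  apply Finset.prod_ne_zero_iff.mpr
  intro i _
  apply mul_ne_zero
  · intro h
    apply mem_compl_iff'.mp hz i
    refine ⟨a i, ⟨le_refl _, (hab i).le⟩, ?_⟩
    linear_combination -h
  · intro h
    apply mem_compl_iff'.mp hz i
    refine ⟨b i, ⟨(hab i).le, le_refl _⟩, ?_⟩
    linear_combination -h

include hab hba in
lemma compl_preconnected : IsPreconnected (bands a b)ᶜ := by
  classical
  set U := (bands a b)ᶜ with hU
  set M : ℂ := ((b (Fin.last g) + 1 : ℝ) : ℂ) with hM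
  have hMU : M ∈ U := by
    rw [hU, Set.mem_compl_iff]
    apply notMem_bands_of_gaps
    intro i
    right
    calc b i ≤ b (Fin.last g) := (bMono hab hba).monotone (Fin.le_last i)
      _ < b (Fin.last g) + 1 := by linarith
  have hIU : Complex.I ∈ U := by
    rw [hU, Set.mem_compl_iff]
    exact notMem_bands_of_im (by simp)
  have him : ∀ z : ℂ, z.im ≠ 0 → z ∈ U := by
    intro z hz
    rw [hU, Set.mem_compl_iff]
    exact notMem_bands_of_im hz
  set mid : ℂ → ℂ := fun z => if z.im < 0 then M else z with hmid
  set P : ℂ → Set ℂ := fun z => segment ℝ z (mid z) ∪ segment ℝ (mid z) Complex.I with hP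
  have hzP : ∀ z, z ∈ P z := fun z => Or.inl (left_mem_segment ℝ z (mid z))
  have hIP : ∀ z, Complex.I ∈ P z := fun z => Or.inr (right_mem_segment ℝ (mid z) Complex.I)
  have hpre : ∀ z, IsPreconnected (P z) :=
    fun z => IsPreconnected.union (mid z)
      (right_mem_segment ℝ z (mid z)) (left_mem_segment ℝ (mid z) Complex.I)
      (convex_segment z (mid z)).isPreconnected
      (convex_segment (mid z) Complex.I).isPreconnected
  have hsub : ∀ z ∈ U, P z ⊆ U := by
    intro z hz p hp
    by_cases hzim : z.im < 0
    · rcases hp with hp | hp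
      · obtain ⟨s, t, hs, ht, hst, rfl⟩ := hp
        rcases eq_or_lt_of_le hs with hs0 | hs0
        · have : t = 1 := by linarith
          rw [← hs0, this]
          simpa [hmid, hzim] using hMU
        · apply him
          have : (s • z + t • mid z).im = s * z.im := by
            simp [hmid, hzim, Complex.add_im, Complex.smul_im, hM]
          rw [this]
          exact ne_of_lt (mul_neg_of_pos_of_neg hs0 hzim)
      · obtain ⟨s, t, hs, ht, hst, rfl⟩ := hp
        rcases eq_or_lt_of_le ht with ht0 | ht0
        · have : s = 1 := by linarith
          rw [← ht0, this]
          simpa [hmid, hzim] using hMU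
        · apply him
          have : (s • mid z + t • Complex.I).im = t := by
            simp [hmid, hzim, Complex.add_im, Complex.smul_im, hM]
          rw [this]
          exact (ne_of_lt ht0).symm
    · push_neg at hzim
      rcases hp with hp | hp
      · rw [hmid] at hp
        simp only [if_neg (not_lt.mpr hzim)] at hp
        rw [segment_same] at hp
        rwa [hp]
      · obtain ⟨s, t, hs, ht, hst, rfl⟩ := hp
        rcases eq_or_lt_of_le ht with ht0 | ht0
        · have hs1 : s = 1 := by linarith
          rw [← ht0, hs1]
          simp only [one_smul, zero_smul, add_zero, hmid, if_neg (not_lt.mpr hzim)]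
          exact hz
        · apply him
          have : (s • mid z + t • Complex.I).im = s * z.im + t := by
            simp [hmid, if_neg (not_lt.mpr hzim), Complex.add_im, Complex.smul_im]
          rw [this]
          have : 0 < s * z.im + t := by nlinarith
          linarith
  have hUnion : U = ⋃₀ ((fun z => P z) '' U) := by
    apply Set.Subset.antisymm
    · intro z hz
      exact ⟨P z, ⟨z, hz, rfl⟩, hzP z⟩
    · rintro p ⟨t, ⟨z, hz, rfl⟩, hp⟩
      exact hsub z hz hp
  rw [hUnion]
  apply isPreconnected_sUnion Complex.I
  · rintro t ⟨z, hz, rfl⟩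
    exact hIP z
  · rintro t ⟨z, hz, rfl⟩
    exact hpre z

include hab hba in
lemma sP_unique {s' : ℂ → ℂ}
    (hd' : DifferentiableOn ℂ s' (bands a b)ᶜ)
    (hsq' : ∀ z ∈ (bands a b)ᶜ, s' z ^ 2 = ∏ h : Fin (g+1), (z - (a h : ℂ)) * (z - (b h : ℂ)))
    (ht' : Tendsto (fun z : ℂ => s' z / z ^ (g + 1))
      (comap (fun z : ℂ => ‖z‖) atTop) (nhds 1)) :
    Set.EqOn s' (sP a b) (bands a b)ᶜ := by
  classical
  set U := (bands a b)ᶜ with hUdef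
  have hUopen : IsOpen U := by
    apply isOpen_compl_iff.mpr
    apply isClosed_iUnion_of_finite
    intro i
    exact ((isCompact_Icc).image Complex.continuous_ofReal).isClosed
  have hcont : ∀ z ∈ U, ContinuousAt (sP a b) z := by
    intro z hz
    exact (((sP_diff hab) z hz).differentiableAt (hUopen.mem_nhds hz)).continuousAt
  have hcont' : ∀ z ∈ U, ContinuousAt s' z := by
    intro z hz
    exact ((hd' z hz).differentiableAt (hUopen.mem_nhds hz)).continuousAt
  have hsne : ∀ z ∈ U, sP a b z ≠ 0 := by
    intro z hz h
    apply sigmaC_ne_zero hab hz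
    rw [← sP_sq hab hz, h]
    ring
  set A := {z | z ∈ U ∧ s' z = sP a b z} with hA
  set B := {z | z ∈ U ∧ s' z = -sP a b z} with hB
  have hcover : U ⊆ A ∪ B := by
    intro z hz
    have h0 : (s' z - sP a b z) * (s' z + sP a b z) = 0 := by
      linear_combination (hsq' z hz) - (sP_sq hab hz)
    rcases mul_eq_zero.mp h0 with h | h
    · exact Or.inl ⟨hz, by linear_combination h⟩
    · exact Or.inr ⟨hz, by linear_combination h⟩
  have hAopen : IsOpen A := by
    rw [isOpen_iff_mem_nhds]
    rintro z ⟨hzU, hzv⟩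
    have hne : s' z + sP a b z ≠ 0 := by
      rw [hzv]
      intro h
      apply hsne z hzU
      have : (2:ℂ) ≠ 0 := two_ne_zero
      field_simp at h
      exact (mul_eq_zero.mp h).resolve_right (by norm_num)
    have hev : ∀ᶠ w in nhds z, s' w + sP a b w ≠ 0 :=
      (((hcont' z hzU).add (hcont z hzU)).eventually_ne hne)
    filter_upwards [hev, hUopen.mem_nhds hzU] with w hw hwU
    rcases hcover hwU with h | h
    · exact h
    · exfalso
      apply hw
      rw [h.2]
      ring
  have hBopen : IsOpen B := by
    rw [isOpen_iff_mem_nhds]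
    rintro z ⟨hzU, hzv⟩
    have hne : s' z - sP a b z ≠ 0 := by
      rw [hzv]
      intro h
      apply hsne z hzU
      have h2 : (-2 : ℂ) * sP a b z = 0 := by linear_combination h
      simpa using h2
    have hev : ∀ᶠ w in nhds z, s' w - sP a b w ≠ 0 :=
      (((hcont' z hzU).sub (hcont z hzU)).eventually_ne hne)
    filter_upwards [hev, hUopen.mem_nhds hzU] with w hw hwU
    rcases hcover hwU with h | h
    · exfalso
      apply hw
      rw [h.2]
      ring
    · exact h
  have hdisj : Disjoint A B := by
    rw [Set.disjoint_left]
    rintro z ⟨hzU, h1⟩ ⟨_, h2⟩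
    apply hsne z hzU
    have : (2:ℂ) * sP a b z = 0 := by linear_combination h2 - h1
    simpa using this
  rcases (compl_preconnected hab hba).subset_or_subset hAopen hBopen hdisj hcover with h | h
  · intro z hz
    exact (h hz).2
  · exfalso
    have hL : (comap (fun z : ℂ => ‖z‖) atTop).NeBot := comap_neBot
    have hneg : Tendsto (fun z : ℂ => s' z / z ^ (g + 1))
        (comap (fun z : ℂ => ‖z‖) atTop) (nhds (-1)) := by
      have hsP := sP_tendsto hab (a := a) (b := b)
      have : Tendsto (fun z : ℂ => -(sP a b z / z ^ (g + 1)))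
          (comap (fun z : ℂ => ‖z‖) atTop) (nhds (-1)) := hsP.neg
      apply this.congr'
      filter_upwards [eventually_mem_compl hab hba] with z hz
      rw [(h hz).2]
      ring
    have := tendsto_nhds_unique ht' hneg
    norm_num at this

include hab hba in
lemma sP_lim (h : Fin (g+1)) {x : ℝ} (hx1 : a h < x) (hx2 : x < b h) :
    Tendsto (fun ε : ℝ => sP a b ((x:ℂ) + (ε:ℂ) * Complex.I)) (nhdsWithin 0 (Set.Ioi 0))
      (nhds (Complex.I * (-1:ℂ) ^ (g - h.val) *
        ((Real.sqrt (-(∏ i : Fin (g+1), (x - a i) * (x - b i))) : ℝ) : ℂ))) := by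
  classical
  have hdich : ∀ i : Fin (g+1), i ≠ h → (x < a i ∨ b i < x) := by
    intro i hi
    rcases lt_or_gt_of_ne hi with hlt | hgt
    · right
      calc b i < a h := b_lt_a hab hba hlt
        _ < x := hx1
    · left
      calc x < b h := hx2
        _ < a i := b_lt_a hab hba hgt
  have hgt_iff : ∀ i : Fin (g+1), (x < a i ↔ h < i) := by
    intro i
    constructor
    · intro hxa
      rcases lt_trichotomy h i with h1 | h1 | h1
      · exact h1
      · exfalso; rw [← h1] at hxa; linarith
      · exfalso
        have : b i < a h := b_lt_a hab hba h1
        have := hab i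
        linarith
    · intro h1
      calc x < b h := hx2
        _ < a i := b_lt_a hab hba h1
  set p : Fin (g+1) → ℝ := fun i => (x - a i) * (x - b i) with hp
  have hp_pos : ∀ i ≠ h, 0 < p i := by
    intro i hi
    have h2 : (0:ℝ) < (x - a i) * (x - b i) := by
      rcases hdich i hi with h1 | h1
      · have := hab i; nlinarith
      · have := hab i; nlinarith
    simpa [hp] using h2
  have hbase : Tendsto (fun ε : ℝ => (x:ℂ) + (ε:ℂ) * Complex.I) (nhdsWithin 0 (Set.Ioi 0))
      (nhds (x:ℂ)) := by
    have hc : Continuous (fun ε : ℝ => (x:ℂ) + (ε:ℂ) * Complex.I) := by continuity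
    have h := (hc.tendsto 0).mono_left
      (nhdsWithin_le_nhds : nhdsWithin (0:ℝ) (Set.Ioi 0) ≤ nhds 0)
    simpa using h
  set lim : Fin (g+1) → ℂ := fun i =>
    if i = h then Complex.I * ((Real.sqrt ((x - a h) * (b h - x)) : ℝ) : ℂ)
    else (((if x < a i then (-1:ℝ) else 1) * Real.sqrt (p i) : ℝ) : ℂ) with hlim
  have hprod : Tendsto (fun ε : ℝ => sP a b ((x:ℂ) + (ε:ℂ) * Complex.I))
      (nhdsWithin 0 (Set.Ioi 0)) (nhds (∏ i : Fin (g+1), lim i)) := by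
    apply tendsto_finset_prod
    intro i _
    by_cases hi : i = h
    · subst hi
      rw [hlim]
      simp only [if_pos rfl]
      exact f_lim (hab i) hx1 hx2
    · rw [hlim]
      simp only [if_neg hi]
      have hcf := (f_cont (hab i) (notMem_cut (hdich i hi))).tendsto.comp hbase
      have hfeq : ((f (a i) (b i)) ∘ (fun ε : ℝ => (x:ℂ) + (ε:ℂ) * Complex.I))
          = fun ε : ℝ => f (a i) (b i) ((x:ℂ) + (ε:ℂ) * Complex.I) := rfl
      rw [hfeq] at hcf
      rcases hdich i hi with h1 | h1
      · rw [if_pos h1]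
        rw [f_real_neg (hab i) h1] at hcf
        convert hcf using 2
        push_cast
        ring
      · rw [if_neg (by have := hab i; push_neg; linarith)]
        rw [f_real_pos (hab i) h1] at hcf
        convert hcf using 2
        push_cast
        ring
  -- now identify the product of limits
  have hval : (∏ i : Fin (g+1), lim i) =
      Complex.I * (-1:ℂ) ^ (g - h.val) *
        ((Real.sqrt (-(∏ i : Fin (g+1), (x - a i) * (x - b i))) : ℝ) : ℂ) := by
    rw [← Finset.mul_prod_erase Finset.univ lim (Finset.mem_univ h)]
    have h1 : lim h = Complex.I * ((Real.sqrt ((x - a h) * (b h - x)) : ℝ) : ℂ) := by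
      rw [hlim]; simp
    have h2 : ∏ i ∈ Finset.univ.erase h, lim i =
        (((-1:ℝ) ^ (g - h.val) * Real.sqrt (∏ i ∈ Finset.univ.erase h, p i) : ℝ) : ℂ) := by
      have hcongr : ∀ i ∈ Finset.univ.erase h, lim i =
          (((if x < a i then (-1:ℝ) else 1) * Real.sqrt (p i) : ℝ) : ℂ) := by
        intro i hi
        rw [hlim]
        simp only [if_neg (Finset.mem_erase.mp hi).1]
      rw [Finset.prod_congr rfl hcongr, ← Complex.ofReal_prod]
      congr 1
      rw [Finset.prod_mul_distrib, Finset.prod_ite, Finset.prod_const, Finset.prod_const,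
        one_pow, mul_one, sqrt_prod _ _ (fun i hi => (hp_pos i (Finset.mem_erase.mp hi).1).le)]
      congr 2
      have : (Finset.univ.erase h).filter (fun i => x < a i)
          = Finset.univ.filter (fun i : Fin (g+1) => h < i) := by
        ext i
        simp only [Finset.mem_filter, Finset.mem_erase, Finset.mem_univ, true_and, and_true]
        constructor
        · rintro ⟨hne, hxa⟩
          exact (hgt_iff i).mp hxa
        · intro hlt
          exact ⟨ne_of_gt hlt, (hgt_iff i).mpr hlt⟩
      rw [this, card_gt]
    rw [h1, h2]
    have hsig : -(∏ i : Fin (g+1), (x - a i) * (x - b i)) =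
        ((x - a h) * (b h - x)) * ∏ i ∈ Finset.univ.erase h, p i := by
      rw [← Finset.mul_prod_erase Finset.univ (fun i => (x - a i) * (x - b i))
        (Finset.mem_univ h)]
      have : ∏ i ∈ Finset.univ.erase h, (x - a i) * (x - b i)
          = ∏ i ∈ Finset.univ.erase h, p i := rfl
      rw [this]
      ring
    rw [hsig, Real.sqrt_mul (by nlinarith : (0:ℝ) ≤ (x - a h) * (b h - x))]
    push_cast
    ring
  rw [← hval]
  exact hprod

include hab hba in
lemma sigma_neg (h : Fin (g+1)) {x : ℝ} (hx1 : a h < x) (hx2 : x < b h) :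
    (∏ i : Fin (g+1), (x - a i) * (x - b i)) < 0 := by
  classical
  have hdich : ∀ i : Fin (g+1), i ≠ h → (x < a i ∨ b i < x) := by
    intro i hi
    rcases lt_or_gt_of_ne hi with hlt | hgt
    · right
      calc b i < a h := b_lt_a hab hba hlt
        _ < x := hx1
    · left
      calc x < b h := hx2
        _ < a i := b_lt_a hab hba hgt
  rw [← Finset.mul_prod_erase Finset.univ _ (Finset.mem_univ h)]
  apply mul_neg_of_neg_of_pos
  · nlinarith
  · apply Finset.prod_pos
    intro i hi
    rcases hdich i (Finset.mem_erase.mp hi).1 with h1 | h1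
    · have := hab i; nlinarith
    · have := hab i; nlinarith

end Assembly

end SqS

/-- Existence and uniqueness of the holomorphic square root `s` of `σ` on `ℂ ∖ S`
normalized by `s(z)/z^{g+1} → 1` at infinity, together with its explicit sign
determinations on the gaps (i) and its boundary values from the upper half-plane
on the bands (ii). -/
theorem holomorphic_sqrt_of_sigma
    (g : ℕ) (a b : Fin (g + 1) → ℝ)
    (hab : ∀ h, a h < b h)
    (hba : ∀ h : Fin g, b h.castSucc < a h.succ) :
    ∃ s : ℂ → ℂ,
      (DifferentiableOn ℂ s (bandsC g a b)ᶜ ∧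
        (∀ z ∈ (bandsC g a b)ᶜ, s z ^ 2 = sigmaC g a b z) ∧
        Tendsto (fun z : ℂ => s z / z ^ (g + 1))
          (Filter.comap (fun z : ℂ => ‖z‖) atTop) (nhds 1)) ∧
      (∀ s' : ℂ → ℂ,
        (DifferentiableOn ℂ s' (bandsC g a b)ᶜ ∧
          (∀ z ∈ (bandsC g a b)ᶜ, s' z ^ 2 = sigmaC g a b z) ∧
          Tendsto (fun z : ℂ => s' z / z ^ (g + 1))
            (Filter.comap (fun z : ℂ => ‖z‖) atTop) (nhds 1)) →
        Set.EqOn s' s (bandsC g a b)ᶜ) ∧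
      -- (i) on the gaps, σ > 0 and s is the real square root with an explicit sign
      (∀ x : ℝ, x < a 0 →
        0 < sigmaR g a b x ∧
          s (x : ℂ) = (((-1 : ℝ) ^ (g + 1) * Real.sqrt (sigmaR g a b x) : ℝ) : ℂ)) ∧
      (∀ h : Fin g, ∀ x ∈ Set.Ioo (b h.castSucc) (a h.succ),
        0 < sigmaR g a b x ∧
          s (x : ℂ) = (((-1 : ℝ) ^ (g - (h : ℕ)) * Real.sqrt (sigmaR g a b x) : ℝ) : ℂ)) ∧
      (∀ x : ℝ, b (Fin.last g) < x →
        0 < sigmaR g a b x ∧ s (x : ℂ) = ((Real.sqrt (sigmaR g a b x) : ℝ) : ℂ)) ∧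
      -- (ii) on the bands, σ < 0 and the boundary value from above is `i(−1)^{g−h}√(−σ)`
      (∀ h : Fin (g + 1), ∀ x ∈ Set.Ioo (a h) (b h),
        sigmaR g a b x < 0 ∧
          Tendsto (fun ε : ℝ => s ((x : ℂ) + (ε : ℂ) * Complex.I))
            (nhdsWithin 0 (Set.Ioi 0))
            (nhds (Complex.I * (-1 : ℂ) ^ (g - (h : ℕ)) *
              ((Real.sqrt (-sigmaR g a b x) : ℝ) : ℂ)))) := by
  classical
  have hband : bandsC g a b = SqS.bands a b := rfl
  refine ⟨SqS.sP a b, ⟨?_, ?_, ?_⟩, ?_, ?_, ?_, ?_, ?_⟩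
  · rw [hband]
    exact SqS.sP_diff hab
  · intro z hz
    rw [hband] at hz
    exact SqS.sP_sq hab hz
  · exact SqS.sP_tendsto hab
  · rintro s' ⟨hd', hsq', ht'⟩
    rw [hband] at hd' hsq' ⊢
    exact SqS.sP_unique hab hba hd' hsq' ht'
  · -- leftmost gap
    intro x hx
    have hdich : ∀ i, x < a i ∨ b i < x := fun i =>
      Or.inl (lt_of_lt_of_le hx ((SqS.aMono hab hba).monotone (Fin.zero_le i)))
    refine ⟨Finset.prod_pos (fun i _ => SqS.sigmaR_pos hab hdich i), ?_⟩
    have hv := SqS.sP_real hab hdich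
    have hcard : (Finset.univ.filter fun i : Fin (g+1) => x < a i).card = g + 1 := by
      rw [Finset.filter_true_of_mem (fun i _ =>
        lt_of_lt_of_le hx ((SqS.aMono hab hba).monotone (Fin.zero_le i)))]
      rw [Finset.card_univ, Fintype.card_fin]
    rw [hv, hcard]
    rfl
  · -- middle gaps
    intro h x hx
    obtain ⟨hx1, hx2⟩ := hx
    have hdich : ∀ i, x < a i ∨ b i < x := by
      intro i
      rcases le_or_gt i h.castSucc with hle | hlt
      · right
        calc b i ≤ b h.castSucc := (SqS.bMono hab hba).monotone hle
          _ < x := hx1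
      · left
        have hsle : h.succ ≤ i := by
          rw [Fin.le_def]
          have h2 := Fin.lt_def.mp hlt
          simp only [Fin.coe_castSucc] at h2
          simp only [Fin.val_succ]
          omega
        calc x < a h.succ := hx2
          _ ≤ a i := (SqS.aMono hab hba).monotone hsle
    refine ⟨Finset.prod_pos (fun i _ => SqS.sigmaR_pos hab hdich i), ?_⟩
    have hv := SqS.sP_real hab hdich
    have hiff : ∀ i : Fin (g+1), x < a i ↔ h.castSucc < i := by
      intro i
      constructor
      · intro hxa
        by_contra hc
        push_neg at hc
        have : b i ≤ b h.castSucc := (SqS.bMono hab hba).monotone hc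
        have := hab i
        linarith
      · intro hlt
        have hsle : h.succ ≤ i := by
          rw [Fin.le_def]
          have h2 := Fin.lt_def.mp hlt
          simp only [Fin.coe_castSucc] at h2
          simp only [Fin.val_succ]
          omega
        calc x < a h.succ := hx2
          _ ≤ a i := (SqS.aMono hab hba).monotone hsle
    have hcard : (Finset.univ.filter fun i : Fin (g+1) => x < a i).card = g - h.val := by
      rw [Finset.filter_congr (fun i _ => by rw [hiff i]), SqS.card_gt]
      rfl
    rw [hv, hcard]
    rfl
  · -- rightmost gap
    intro x hx
    have hdich : ∀ i, x < a i ∨ b i < x := fun i =>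
      Or.inr (lt_of_le_of_lt ((SqS.bMono hab hba).monotone (Fin.le_last i)) hx)
    refine ⟨Finset.prod_pos (fun i _ => SqS.sigmaR_pos hab hdich i), ?_⟩
    have hv := SqS.sP_real hab hdich
    have hcard : (Finset.univ.filter fun i : Fin (g+1) => x < a i).card = 0 := by
      rw [Finset.card_eq_zero, Finset.filter_eq_empty_iff]
      intro i _
      push_neg
      rcases hdich i with h1 | h1
      · exfalso
        have := lt_of_le_of_lt ((SqS.bMono hab hba).monotone (Fin.le_last i)) hx
        have := hab i
        linarith
      · have := hab i
        linarith
    rw [hv, hcard]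
    norm_num
    rfl
  · -- bands
    intro h x hx
    obtain ⟨hx1, hx2⟩ := hx
    exact ⟨SqS.sigma_neg hab hba h hx1 hx2, SqS.sP_lim hab hba h hx1 hx2⟩


end
end
end

section
/- Let g≥1, let a_0<b_0<a_1<b_1<⋯<a_g<b_g be real numbers, and let M be a nonzero polynomial with real coefficients such that (−1)^{g−h}·M(x) ≥ 0 for all x∈[a_h,b_h] and all h∈{0,…,g}. Then: (i) every real root of M lying in one of the open intervals (a_h,b_h), h∈{0,…,g}, has even multiplicity; and (ii) for every h∈{1,…,g}, the number of roots of M lying in the closed gap [b_{h−1},a_h], counted with multiplicity, is odd. -/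
open Polynomial

private lemma auxPowSign (u v : ℝ) (hu : u < 0) (hv : v ≠ 0) (m : ℕ) :
    0 < u ^ m * v ↔ (Even m ↔ 0 < v) := by
  rcases Nat.even_or_odd m with hm | hm
  · have h1 : 0 < u ^ m := hm.pow_pos hu.ne
    simp only [iff_true_intro hm, true_iff]
    rw [mul_pos_iff]
    constructor
    · rintro (⟨_, h⟩ | ⟨h, _⟩) <;> linarith
    · intro h; exact Or.inl ⟨h1, h⟩
  · have h1 : u ^ m < 0 := hm.pow_neg hu
    have h2 : ¬ Even m := Nat.not_even_iff_odd.mpr hm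
    simp only [iff_false_intro h2, false_iff, not_lt]
    rw [mul_pos_iff]
    constructor
    · rintro (⟨h, _⟩ | ⟨_, h⟩) <;> linarith
    · intro h
      exact Or.inr ⟨h1, lt_of_le_of_ne h hv⟩

private lemma parityKey : ∀ (n : ℕ) (M : Polynomial ℝ), M.natDegree = n → M ≠ 0 →
    ∀ c d : ℝ, c < d → M.eval c ≠ 0 → M.eval d ≠ 0 →
    (Even (Multiset.card (M.roots.filter (fun x => c < x ∧ x < d))) ↔
      0 < M.eval c * M.eval d) := by
  intro n
  induction n using Nat.strong_induction_on with
  | _ n ih =>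
    intro M hdeg hM c d hcd hc hd
    by_cases hroot : ∃ r ∈ M.roots, c < r ∧ r < d
    · obtain ⟨r, hrmem, hcr, hrd⟩ := hroot
      have hr0 : M.eval r = 0 := Polynomial.isRoot_of_mem_roots hrmem
      set m := M.rootMultiplicity r with hmdef
      set N := M /ₘ (X - C r) ^ m with hNdef
      have hfac : (X - C r) ^ m * N = M :=
        Polynomial.pow_mul_divByMonic_rootMultiplicity_eq M r
      have hNr : N.eval r ≠ 0 :=
        Polynomial.eval_divByMonic_pow_rootMultiplicity_ne_zero r hM
      have hN0 : N ≠ 0 := fun h => hNr (by simp [h])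
      have hm1 : 0 < m := (Polynomial.rootMultiplicity_pos hM).mpr hr0
      have hXC : ((X - C r : ℝ[X]) ^ m) ≠ 0 := pow_ne_zero _ (X_sub_C_ne_zero r)
      have hdegN : N.natDegree < n := by
        have : M.natDegree = m + N.natDegree := by
          rw [← hfac, Polynomial.natDegree_mul hXC hN0, Polynomial.natDegree_pow,
            Polynomial.natDegree_X_sub_C, mul_one]
        omega
      have hevc : M.eval c = (c - r) ^ m * N.eval c := by
        rw [← hfac]; simp
      have hevd : M.eval d = (d - r) ^ m * N.eval d := by
        rw [← hfac]; simp
      have hNc : N.eval c ≠ 0 := fun h => hc (by rw [hevc, h, mul_zero])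
      have hNd : N.eval d ≠ 0 := fun h => hd (by rw [hevd, h, mul_zero])
      have hrootsM : M.roots = m • {r} + N.roots := by
        rw [← hfac, Polynomial.roots_mul (hfac ▸ hM), Polynomial.roots_pow,
          Polynomial.roots_X_sub_C]
      have hcard : Multiset.card (M.roots.filter (fun x => c < x ∧ x < d)) =
          m + Multiset.card (N.roots.filter (fun x => c < x ∧ x < d)) := by
        rw [hrootsM, Multiset.filter_add, Multiset.card_add]
        congr 1
        rw [Multiset.nsmul_singleton, Multiset.filter_eq_self.mpr, Multiset.card_replicate]
        intro x hx
        rw [Multiset.eq_of_mem_replicate hx]; exact ⟨hcr, hrd⟩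
      have hIH := ih N.natDegree hdegN N rfl hN0 c d hcd hNc hNd
      have hu : (c - r) * (d - r) < 0 :=
        mul_neg_of_neg_of_pos (by linarith) (by linarith)
      have hvne : N.eval c * N.eval d ≠ 0 := mul_ne_zero hNc hNd
      have hprod : M.eval c * M.eval d = ((c - r) * (d - r)) ^ m * (N.eval c * N.eval d) := by
        rw [hevc, hevd, mul_pow]; ring
      rw [hcard, hprod, auxPowSign _ _ hu hvne, Nat.even_add]
      tauto
    · push_neg at hroot
      have hempty : M.roots.filter (fun x => c < x ∧ x < d) = 0 := by
        rw [Multiset.filter_eq_nil]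
        intro x hx hP
        exact absurd (hroot x hx hP.1) (not_le.mpr hP.2)
      rw [hempty]
      simp only [Multiset.card_zero, Even.zero, true_iff]
      rcases lt_trichotomy (M.eval c * M.eval d) 0 with hneg | hzero | hpos
      · exfalso
        rcases mul_neg_iff.mp hneg with ⟨h1, h2⟩ | ⟨h1, h2⟩
        · obtain ⟨x, hx, hfx⟩ := intermediate_value_Ioo' hcd.le
            (M.continuousOn (s := Set.Icc c d)) (Set.mem_Ioo.mpr ⟨h2, h1⟩)
          exact absurd (hroot x ((Polynomial.mem_roots hM).mpr hfx) hx.1) (not_le.mpr hx.2)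
        · obtain ⟨x, hx, hfx⟩ := intermediate_value_Ioo hcd.le
            (M.continuousOn (s := Set.Icc c d)) (Set.mem_Ioo.mpr ⟨h1, h2⟩)
          exact absurd (hroot x ((Polynomial.mem_roots hM).mpr hfx) hx.1) (not_le.mpr hx.2)
      · exact absurd hzero (mul_ne_zero hc hd)
      · exact hpos

private lemma existsPtLeft (M : Polynomial ℝ) (hM : M ≠ 0) (u v : ℝ) (huv : u < v) :
    ∃ c, u < c ∧ c < v ∧ M.eval c ≠ 0 ∧ ∀ r ∈ M.roots, r < v → r < c := by
  classical
  set F := insert u (M.roots.toFinset.filter (· < v)) with hF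
  have hne : F.Nonempty := ⟨u, Finset.mem_insert_self _ _⟩
  set y := F.max' hne with hy
  have huy : u ≤ y := F.le_max' u (Finset.mem_insert_self _ _)
  have hyv : y < v := by
    rcases Finset.mem_insert.mp (F.max'_mem hne) with h | h
    · rw [hy, h]; exact huv
    · exact (Finset.mem_filter.mp h).2
  refine ⟨(y + v) / 2, by linarith, by linarith, ?_, ?_⟩
  · intro h0
    have hmem : (y + v) / 2 ∈ F := Finset.mem_insert_of_mem
      (Finset.mem_filter.mpr ⟨Multiset.mem_toFinset.mpr ((Polynomial.mem_roots hM).mpr h0),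
        by linarith⟩)
    have := F.le_max' _ hmem
    linarith
  · intro r hr hrv
    have hmem : r ∈ F := Finset.mem_insert_of_mem
      (Finset.mem_filter.mpr ⟨Multiset.mem_toFinset.mpr hr, hrv⟩)
    have := F.le_max' r hmem
    linarith

private lemma existsPtRight (M : Polynomial ℝ) (hM : M ≠ 0) (u v : ℝ) (huv : u < v) :
    ∃ d, u < d ∧ d < v ∧ M.eval d ≠ 0 ∧ ∀ r ∈ M.roots, u < r → d < r := by
  classical
  set F := insert v (M.roots.toFinset.filter (u < ·)) with hF
  have hne : F.Nonempty := ⟨v, Finset.mem_insert_self _ _⟩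
  set y := F.min' hne with hy
  have hyv : y ≤ v := F.min'_le v (Finset.mem_insert_self _ _)
  have huy : u < y := by
    rcases Finset.mem_insert.mp (F.min'_mem hne) with h | h
    · rw [hy, h]; exact huv
    · exact (Finset.mem_filter.mp h).2
  refine ⟨(u + y) / 2, by linarith, by linarith, ?_, ?_⟩
  · intro h0
    have hmem : (u + y) / 2 ∈ F := Finset.mem_insert_of_mem
      (Finset.mem_filter.mpr ⟨Multiset.mem_toFinset.mpr ((Polynomial.mem_roots hM).mpr h0),
        by linarith⟩)
    have := F.min'_le _ hmem
    linarith
  · intro r hr hur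
    have hmem : r ∈ F := Finset.mem_insert_of_mem
      (Finset.mem_filter.mpr ⟨Multiset.mem_toFinset.mpr hr, hur⟩)
    have := F.min'_le r hmem
    linarith


/-- Parity of root multiplicities of a polynomial `M` that satisfies the sign condition
`(−1)^{g−h} M ≥ 0` on each band `[a_h, b_h]`: (i) roots inside the open bands have even
multiplicity; (ii) each closed gap `[b_{h−1}, a_h]` contains an odd number of roots,
counted with multiplicity. -/
theorem root_parity_of_band_sign_condition
    (g : ℕ) (hg : 1 ≤ g) (a b : Fin (g + 1) → ℝ)
    (hab : ∀ h, a h < b h)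
    (hba : ∀ h : Fin g, b h.castSucc < a h.succ)
    (M : Polynomial ℝ) (hM : M ≠ 0)
    (hsign : ∀ h : Fin (g + 1), ∀ x ∈ Set.Icc (a h) (b h),
      0 ≤ (-1 : ℝ) ^ (g - (h : ℕ)) * M.eval x) :
    (∀ h : Fin (g + 1), ∀ x ∈ Set.Ioo (a h) (b h),
      M.eval x = 0 → Even (Polynomial.rootMultiplicity x M)) ∧
    (∀ h : Fin g,
      Odd (Multiset.card
        (M.roots.filter (fun x => b h.castSucc ≤ x ∧ x ≤ a h.succ)))) := by
  classical
  -- positivity of ε * M at nonroot points of bands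
  have hpos : ∀ h : Fin (g + 1), ∀ x ∈ Set.Icc (a h) (b h), M.eval x ≠ 0 →
      0 < (-1 : ℝ) ^ (g - (h : ℕ)) * M.eval x := by
    intro h x hx hne
    refine lt_of_le_of_ne (hsign h x hx) (fun heq => hne ?_)
    rcases neg_one_pow_eq_or ℝ (g - (h : ℕ)) with he | he <;>
      rw [he] at heq <;> linarith
  constructor
  · intro h x₀ hx₀ hroot0
    obtain ⟨c, hac, hcx, hMc, hcroots⟩ := existsPtLeft M hM (a h) x₀ hx₀.1
    obtain ⟨d, hxd, hdb, hMd, hdroots⟩ := existsPtRight M hM x₀ (b h) hx₀.2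
    have hcd : c < d := hcx.trans hxd
    have hfilter : M.roots.filter (fun x => c < x ∧ x < d) =
        M.roots.filter (fun x => x = x₀) := by
      apply Multiset.filter_congr
      intro x hx
      constructor
      · rintro ⟨h1, h2⟩
        rcases lt_trichotomy x x₀ with h3 | h3 | h3
        · exact absurd (hcroots x hx h3) (not_lt.mpr h1.le)
        · exact h3
        · exact absurd (hdroots x hx h3) (not_lt.mpr h2.le)
      · rintro rfl; exact ⟨hcx, hxd⟩
    have hcount : Multiset.card (M.roots.filter (fun x => c < x ∧ x < d)) =
        Polynomial.rootMultiplicity x₀ M := by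
      rw [hfilter, ← Polynomial.count_roots, ← Multiset.countP_eq_card_filter,
        Multiset.count]
      exact Multiset.countP_congr rfl (fun x _ => propext eq_comm)
    have hkey := parityKey M.natDegree M rfl hM c d hcd hMc hMd
    rw [hcount] at hkey
    apply hkey.mpr
    have h1 := hpos h c ⟨hac.le, by linarith [hx₀.2]⟩ hMc
    have h2 := hpos h d ⟨by linarith [hx₀.1], hdb.le⟩ hMd
    rcases neg_one_pow_eq_or ℝ (g - (h : ℕ)) with he | he <;>
      rw [he] at h1 h2 <;> nlinarith
  · intro h
    have h0lt : (h : ℕ) < g := h.isLt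
    obtain ⟨c, hac, hcb, hMc, hcroots⟩ :=
      existsPtLeft M hM (a h.castSucc) (b h.castSucc) (hab h.castSucc)
    obtain ⟨d, had, hdb, hMd, hdroots⟩ :=
      existsPtRight M hM (a h.succ) (b h.succ) (hab h.succ)
    have hgap := hba h
    have hcd : c < d := by linarith
    have hfilter : M.roots.filter (fun x => b h.castSucc ≤ x ∧ x ≤ a h.succ) =
        M.roots.filter (fun x => c < x ∧ x < d) := by
      apply Multiset.filter_congr
      intro x hx
      constructor
      · rintro ⟨h1, h2⟩; exact ⟨by linarith, by linarith⟩
      · rintro ⟨h1, h2⟩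
        constructor
        · by_contra h3
          push_neg at h3
          exact absurd (hcroots x hx h3) (not_lt.mpr h1.le)
        · by_contra h3
          push_neg at h3
          exact absurd (hdroots x hx h3) (not_lt.mpr h2.le)
    rw [hfilter]
    have hkey := parityKey M.natDegree M rfl hM c d hcd hMc hMd
    rw [← Nat.not_even_iff_odd, hkey]
    intro hprodpos
    have h1 := hpos h.castSucc c ⟨hac.le, hcb.le⟩ hMc
    have h2 := hpos h.succ d ⟨had.le, hdb.le⟩ hMd
    have hsucc : g - ((h.castSucc : Fin (g+1)) : ℕ) = (g - ((h.succ : Fin (g+1)) : ℕ)) + 1 := by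
      simp only [Fin.coe_castSucc, Fin.val_succ]
      omega
    rw [hsucc, pow_succ] at h1
    rcases neg_one_pow_eq_or ℝ (g - ((h.succ : Fin (g+1)) : ℕ)) with he | he <;>
      rw [he] at h1 h2 <;> nlinarith
end

section
/- Let g≥1 and let a_0<b_0<a_1<b_1<⋯<a_g<b_g be real numbers; set σ(x) := ∏_{h=0}^g (x−a_h)(x−b_h). Then there exist real numbers z_1,…,z_g with z_h ∈ (b_{h−1},a_h) for every h∈{1,…,g}, such that for every h∈{1,…,g}: ∫_{b_{h−1}}^{a_h} ( ∏_{k=1}^{g} (x−z_k) )·√(σ(x)) dx = 0. (Note that σ(x)>0 on each gap (b_{h−1},a_h), so the integrand is real.) -/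
noncomputable section

open Polynomial MeasureTheory intervalIntegral Set

/-- On an order-connected set where a continuous function has no zero, the sign is constant. -/
private lemma sign_const_aux {s : Set ℝ} (hs : s.OrdConnected) {f : ℝ → ℝ} (hf : Continuous f)
    (h0 : ∀ x ∈ s, f x ≠ 0) {x y : ℝ} (hx : x ∈ s) (hy : y ∈ s) (hfx : 0 < f x) :
    0 < f y := by
  rcases lt_or_gt_of_ne (h0 y hy) with h1 | h1
  · exfalso
    have hsub : Set.uIcc y x ⊆ s := hs.uIcc_subset hy hx
    have hmem : (0:ℝ) ∈ Set.uIcc (f y) (f x) :=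
      Set.mem_uIcc.2 (Or.inl ⟨le_of_lt h1, le_of_lt hfx⟩)
    obtain ⟨c, hc, hc0⟩ := intermediate_value_uIcc hf.continuousOn hmem
    exact h0 c (hsub hc) hc0
  · exact h1

/-- If `∫ f·w = 0` on an interval with `w > 0` inside and `f` continuous,
then `f` vanishes somewhere inside. -/
private lemma exists_zero_of_integral_eq_zero {α β : ℝ} (hαβ : α < β) {f w : ℝ → ℝ}
    (hf : Continuous f) (hw : Continuous w) (hw0 : ∀ x ∈ Set.Ioo α β, 0 < w x)
    (hint : (∫ x in α..β, f x * w x) = 0) : ∃ x ∈ Set.Ioo α β, f x = 0 := by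
  by_contra hcon
  push_neg at hcon
  have hx0m : (α + β) / 2 ∈ Set.Ioo α β := ⟨by linarith, by linarith⟩
  have hii : IntervalIntegrable (fun x => f x * w x) volume α β :=
    (hf.mul hw).intervalIntegrable _ _
  rcases lt_or_gt_of_ne (hcon _ hx0m) with h0 | h0
  · -- f negative everywhere inside
    have hpos : ∀ x ∈ Set.Ioo α β, 0 < -(f x * w x) := by
      intro x hx
      have : 0 < -f x := sign_const_aux Set.ordConnected_Ioo hf.neg
        (fun y hy => neg_ne_zero.2 (hcon y hy)) hx0m hx (by rw [Pi.neg_apply]; linarith)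
      have := mul_pos this (hw0 x hx)
      nlinarith
    have hii2 : IntervalIntegrable (fun x => -(f x * w x)) volume α β :=
      (hf.mul hw).neg.intervalIntegrable _ _
    have := intervalIntegral_pos_of_pos_on hii2 hpos hαβ
    rw [intervalIntegral.integral_neg, hint] at this
    simp at this
  · have hpos : ∀ x ∈ Set.Ioo α β, 0 < f x * w x := by
      intro x hx
      exact mul_pos (sign_const_aux Set.ordConnected_Ioo hf hcon hx0m hx h0) (hw0 x hx)
    have := intervalIntegral_pos_of_pos_on hii hpos hαβ
    rw [hint] at this
    exact lt_irrefl _ this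

/-- Existence (via Poincaré–Miranda) of points `z_h` in the gaps `(b_{h−1}, a_h)` such that
all the gap integrals `∫_{b_{h−1}}^{a_h} (∏_k (x − z_k)) √(σ(x)) dx` vanish. -/
theorem exists_gap_zeros_with_vanishing_gap_integrals
    (g : ℕ) (hg : 1 ≤ g) (a b : Fin (g + 1) → ℝ)
    (hab : ∀ h, a h < b h)
    (hba : ∀ h : Fin g, b h.castSucc < a h.succ) :
    ∃ z : Fin g → ℝ,
      (∀ h : Fin g, z h ∈ Set.Ioo (b h.castSucc) (a h.succ)) ∧
      ∀ h : Fin g,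
        (∫ x in (b h.castSucc)..(a h.succ),
          (∏ k : Fin g, (x - z k)) * Real.sqrt (sigmaR g a b x)) = 0 := by
  classical
  -- monotonicity of the band endpoints
  have ha : StrictMono a := Fin.strictMono_iff_lt_succ.2 fun i => (hab i.castSucc).trans (hba i)
  have hb : StrictMono b := Fin.strictMono_iff_lt_succ.2 fun i => (hba i).trans (hab i.succ)
  -- the weight
  set s : ℝ → ℝ := fun x => Real.sqrt (sigmaR g a b x) with hs
  have hsig_cont : Continuous (sigmaR g a b) := by
    unfold sigmaR
    exact continuous_finset_prod _ fun i _ =>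
      ((continuous_id.sub continuous_const).mul (continuous_id.sub continuous_const))
  have hs_cont : Continuous s := hsig_cont.sqrt
  -- positivity of σ on the gaps
  have hsig_pos : ∀ h : Fin g, ∀ x ∈ Set.Ioo (b h.castSucc) (a h.succ),
      0 < sigmaR g a b x := by
    intro h x hx
    unfold sigmaR
    apply Finset.prod_pos
    intro k _
    rcases le_or_gt (k : ℕ) (h : ℕ) with hk | hk
    · have hbk : b k ≤ b h.castSucc := hb.monotone (by simpa [Fin.le_def] using hk)
      have h1 : 0 < x - a k := by
        have := hab k; have := hx.1; nlinarith [hbk]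
      have h2 : 0 < x - b k := by have := hx.1; nlinarith [hbk]
      exact mul_pos h1 h2
    · have hak : a h.succ ≤ a k := ha.monotone (by simpa [Fin.le_def] using hk)
      have h1 : x - a k < 0 := by have := hx.2; nlinarith [hak]
      have h2 : x - b k < 0 := by have := hab k; have := hx.2; nlinarith [hak]
      exact mul_pos_of_neg_of_neg h1 h2
  have hs_pos : ∀ h : Fin g, ∀ x ∈ Set.Ioo (b h.castSucc) (a h.succ), 0 < s x :=
    fun h x hx => Real.sqrt_pos.2 (hsig_pos h x hx)
  -- the period matrix
  set M : Matrix (Fin g) (Fin g) ℝ :=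
    fun h j => ∫ x in (b h.castSucc)..(a h.succ), x ^ (j : ℕ) * s x with hM
  -- mulVec computation
  have hmulVec : ∀ (c : Fin g → ℝ) (h : Fin g),
      M.mulVec c h = ∫ x in (b h.castSucc)..(a h.succ),
        (∑ j : Fin g, c j * x ^ (j : ℕ)) * s x := by
    intro c h
    have : (∫ x in (b h.castSucc)..(a h.succ), (∑ j : Fin g, c j * x ^ (j : ℕ)) * s x)
        = ∑ j : Fin g, ∫ x in (b h.castSucc)..(a h.succ), c j * (x ^ (j : ℕ) * s x) := by
      rw [← intervalIntegral.integral_finset_sum]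
      · congr 1; ext x; rw [Finset.sum_mul]; congr 1; ext j; ring
      · intro j _
        exact (continuous_const.mul ((continuous_pow _).mul hs_cont)).intervalIntegrable _ _
    rw [this]
    simp only [Matrix.mulVec, dotProduct, hM]
    apply Finset.sum_congr rfl
    intro j _
    rw [intervalIntegral.integral_const_mul]; ring
  -- integrals of monomials are integrable and so on; injectivity of M
  have hMinj : Function.Injective (Matrix.mulVecLin M) := by
    rw [← LinearMap.ker_eq_bot, Submodule.eq_bot_iff]
    intro c hc
    rw [LinearMap.mem_ker] at hc
    -- build the polynomial
    set Q : ℝ[X] := ∑ j : Fin g, Polynomial.C (c j) * Polynomial.X ^ (j : ℕ) with hQ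
    have hQeval : ∀ x : ℝ, Q.eval x = ∑ j : Fin g, c j * x ^ (j : ℕ) := by
      intro x; simp [hQ, Polynomial.eval_finset_sum]
    have hQdeg : Q.natDegree < g := by
      have : Q.natDegree ≤ g - 1 := Polynomial.natDegree_sum_le_of_forall_le _ _ (by
        intro j _
        refine le_trans (Polynomial.natDegree_C_mul_le _ _) ?_
        rw [Polynomial.natDegree_X_pow]
        omega)
      omega
    -- each gap integral of Q vanishes
    have hzero : ∀ h : Fin g, ∃ x ∈ Set.Ioo (b h.castSucc) (a h.succ), Q.eval x = 0 := by
      intro h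
      apply exists_zero_of_integral_eq_zero (hba h) Q.continuous hs_cont (hs_pos h)
      have : Matrix.mulVecLin M c h = 0 := by rw [hc]; rfl
      rw [Matrix.mulVecLin_apply, hmulVec] at this
      rw [← this]
      congr 1; ext x; rw [hQeval]
    choose z hz hzQ using hzero
    have hzinj : Function.Injective z := by
      have : StrictMono z := by
        intro h h' hlt
        have h1 : z h < a h.succ := (hz h).2
        have h2 : a h.succ ≤ a h'.castSucc := ha.monotone (by
          simp [Fin.le_def]; omega)
        have h3 : b h'.castSucc < z h' := (hz h').1
        have := hab h'.castSucc
        linarith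
      exact this.injective
    have hQ0 : Q = 0 := Polynomial.eq_zero_of_natDegree_lt_card_of_eval_eq_zero Q hzinj hzQ
      (by simpa using hQdeg)
    -- extract coefficients
    funext j
    have : Q.coeff (j : ℕ) = c j := by
      rw [hQ, Polynomial.finset_sum_coeff]
      simp only [Polynomial.coeff_C_mul, Polynomial.coeff_X_pow, Fin.val_eq_val,
        mul_ite, mul_one, mul_zero]
      simp
    rw [hQ0] at this
    simpa using this.symm
  -- surjectivity
  have hMsurj : Function.Surjective (Matrix.mulVecLin M) :=
    LinearMap.injective_iff_surjective.mp hMinj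
  obtain ⟨c, hc⟩ := hMsurj (fun h => -∫ x in (b h.castSucc)..(a h.succ), x ^ g * s x)
  -- the monic polynomial
  set P : ℝ[X] := Polynomial.X ^ g + ∑ j : Fin g, Polynomial.C (c j) * Polynomial.X ^ (j : ℕ)
    with hP
  have hSdeg : (∑ j : Fin g, Polynomial.C (c j) * Polynomial.X ^ (j : ℕ)).degree < ((g : ℕ) : WithBot ℕ) := by
    apply lt_of_le_of_lt (Polynomial.degree_sum_le _ _)
    rw [Finset.sup_lt_iff (by exact_mod_cast WithBot.bot_lt_coe g)]
    intro j _
    refine lt_of_le_of_lt (Polynomial.degree_C_mul_X_pow_le _ _) ?_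
    exact_mod_cast j.isLt
  have hPmonic : P.Monic := Polynomial.monic_X_pow_add hSdeg
  have hPdeg : P.natDegree = g := by
    have : P.degree = (g : ℕ) := by
      rw [hP, Polynomial.degree_add_eq_left_of_degree_lt (by
        rwa [Polynomial.degree_X_pow]), Polynomial.degree_X_pow]
    exact Polynomial.natDegree_eq_of_degree_eq_some this
  -- gap integrals of P vanish
  have hPint : ∀ h : Fin g,
      (∫ x in (b h.castSucc)..(a h.succ), P.eval x * s x) = 0 := by
    intro h
    have hPeval : ∀ x : ℝ, P.eval x = x ^ g + ∑ j : Fin g, c j * x ^ (j : ℕ) := by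
      intro x; simp [hP, Polynomial.eval_finset_sum]
    have heq : (∫ x in (b h.castSucc)..(a h.succ), P.eval x * s x)
        = (∫ x in (b h.castSucc)..(a h.succ), x ^ g * s x)
          + ∫ x in (b h.castSucc)..(a h.succ), (∑ j : Fin g, c j * x ^ (j : ℕ)) * s x := by
      rw [← intervalIntegral.integral_add
        (show IntervalIntegrable (fun x => x ^ g * s x) volume (b h.castSucc) (a h.succ) from
          ((continuous_pow g).mul hs_cont).intervalIntegrable _ _)
        (show IntervalIntegrable (fun x => (∑ j : Fin g, c j * x ^ (j : ℕ)) * s x) volume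
          (b h.castSucc) (a h.succ) from
          ((continuous_finset_sum _ fun j _ => continuous_const.mul (continuous_pow _)).mul
          hs_cont).intervalIntegrable _ _)]
      congr 1; ext x; rw [hPeval]; ring
    rw [heq, ← hmulVec c h]
    have : Matrix.mulVec M c h = -∫ x in (b h.castSucc)..(a h.succ), x ^ g * s x := by
      rw [← Matrix.mulVecLin_apply, hc]
    rw [this]; ring
  -- roots of P in the gaps
  have hroot : ∀ h : Fin g, ∃ x ∈ Set.Ioo (b h.castSucc) (a h.succ), P.eval x = 0 := by
    intro h
    exact exists_zero_of_integral_eq_zero (hba h) P.continuous hs_cont (hs_pos h) (hPint h)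
  choose z hz hzP using hroot
  have hzmono : StrictMono z := by
    intro h h' hlt
    have h1 : z h < a h.succ := (hz h).2
    have h2 : a h.succ ≤ a h'.castSucc := ha.monotone (by simp [Fin.le_def]; omega)
    have h3 : b h'.castSucc < z h' := (hz h').1
    have := hab h'.castSucc
    linarith
  -- P equals the product over its roots
  set R : ℝ[X] := P - ∏ k : Fin g, (Polynomial.X - Polynomial.C (z k)) with hR
  have hprod_monic : (∏ k : Fin g, (Polynomial.X - Polynomial.C (z k))).Monic :=
    Polynomial.monic_prod_of_monic _ _ fun k _ => Polynomial.monic_X_sub_C _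
  have hprod_deg : (∏ k : Fin g, (Polynomial.X - Polynomial.C (z k))).natDegree = g := by
    rw [Polynomial.natDegree_prod _ _ (fun k _ => Polynomial.X_sub_C_ne_zero _)]
    simp [Polynomial.natDegree_X_sub_C]
  have hR0 : R = 0 := by
    by_cases hR' : R = 0
    · exact hR'
    · have hdeg : R.natDegree < g := by
        have hdlt : R.degree < P.degree := by
          apply Polynomial.degree_sub_lt
          · rw [Polynomial.degree_eq_natDegree hPmonic.ne_zero,
              Polynomial.degree_eq_natDegree hprod_monic.ne_zero, hPdeg, hprod_deg]
          · exact hPmonic.ne_zero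
          · rw [hPmonic.leadingCoeff, hprod_monic.leadingCoeff]
        have : R.degree < (g : ℕ) := by
          rwa [Polynomial.degree_eq_natDegree hPmonic.ne_zero, hPdeg] at hdlt
        exact (Polynomial.natDegree_lt_iff_degree_lt hR').2 this
      apply Polynomial.eq_zero_of_natDegree_lt_card_of_eval_eq_zero R hzmono.injective
      · intro k
        rw [hR]
        simp only [Polynomial.eval_sub, Polynomial.eval_prod, Polynomial.eval_X,
          Polynomial.eval_C]
        rw [hzP k, Finset.prod_eq_zero (Finset.mem_univ k) (by ring)]
        ring
      · simpa using hdeg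
  have hPfact : ∀ x : ℝ, (∏ k : Fin g, (x - z k)) = P.eval x := by
    intro x
    have : P = ∏ k : Fin g, (Polynomial.X - Polynomial.C (z k)) := by
      have := hR0; rw [hR, sub_eq_zero] at this; exact this
    rw [this]
    simp [Polynomial.eval_prod]
  refine ⟨z, hz, fun h => ?_⟩
  rw [← hPint h]
  congr 1; ext x
  rw [hPfact]
end
end
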